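/- arXiv:1806.07601 — 3 statements merged into one kernel-verified Lean document; each statement's English description precedes it below -/
import Mathlib

section
/- A generalized Boolean function f : V_n → Z_q is gbent (i.e., |H_f(u)| = 2^{n/2} for all u ∈ V_n) if and only if its weighted adjacency matrix A_f = (ζ^{f(u⊕v)})_{u,v} is a q-Butson Hadamard matrix of dimension 2^n, i.e., A_f · (A_f)^* = 2^n · I. -/
open Finset BigOperators Matrix

noncomputable def zeta (q : ℕ) : ℂ := Complex.exp (2 * Real.pi * Complex.I / q)

def dotp {n : ℕ} (u x : Fin n → ZMod 2) : ZMod 2 := ∑ i, u i * x i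

noncomputable def chr {n : ℕ} (u x : Fin n → ZMod 2) : ℂ := (-1 : ℂ) ^ (dotp u x).val

noncomputable def WHT {n q : ℕ} (f : (Fin n → ZMod 2) → ZMod q) (u : Fin n → ZMod 2) : ℂ :=
  ∑ x, zeta q ^ (f x).val * chr u x

noncomputable def Amat {n q : ℕ} (f : (Fin n → ZMod 2) → ZMod q) :
    Matrix (Fin n → ZMod 2) (Fin n → ZMod 2) ℂ :=
  fun u v => zeta q ^ (f (u + v)).val

/-!
Put `g x = ζ ^ f x`. The `(u, w)` entry of `A_f A_f*` is the autocorrelation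
`C(u + w) = ∑ y, g (y + u + w) * conj (g y)`, and `|H_f(u)|²` is the Walsh transform of `C`
(Wiener–Khinchin). By Walsh inversion, `|H_f|²` is the constant `2 ^ n` exactly when
`C = 2 ^ n δ₀`, which is exactly `A_f A_f* = 2 ^ n I`.
-/

section Walsh

variable {n : ℕ}

lemma dotp_comm (u x : Fin n → ZMod 2) : dotp u x = dotp x u := by
  simp only [dotp, mul_comm]

lemma dotp_add_right (u x y : Fin n → ZMod 2) : dotp u (x + y) = dotp u x + dotp u y := by
  simp only [dotp, Pi.add_apply, mul_add, sum_add_distrib]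

lemma neg_one_pow_val_add (a b : ZMod 2) :
    (-1 : ℂ) ^ (a + b).val = (-1) ^ a.val * (-1) ^ b.val := by
  rw [ZMod.val_add, ← neg_one_pow_eq_pow_mod_two, pow_add]

lemma chr_comm (u x : Fin n → ZMod 2) : chr u x = chr x u := by
  rw [chr, chr, dotp_comm]

lemma chr_add_right (u x y : Fin n → ZMod 2) : chr u (x + y) = chr u x * chr u y := by
  rw [chr, dotp_add_right, neg_one_pow_val_add, chr, chr]

lemma chr_add_left (u v x : Fin n → ZMod 2) : chr (u + v) x = chr u x * chr v x := by
  rw [chr_comm, chr_add_right, chr_comm u, chr_comm v]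

@[simp]
lemma chr_zero_right (u : Fin n → ZMod 2) : chr u 0 = 1 := by
  simp [chr, dotp]

@[simp]
lemma conj_chr (u x : Fin n → ZMod 2) : starRingEnd ℂ (chr u x) = chr u x := by
  simp [chr]

lemma exists_chr_eq_neg_one {t : Fin n → ZMod 2} (ht : t ≠ 0) : ∃ e, chr e t = -1 := by
  obtain ⟨j, hj⟩ := Function.ne_iff.mp ht
  refine ⟨Pi.single j 1, ?_⟩
  have hdot : dotp (Pi.single j 1) t = t j := by
    simp [dotp, Pi.single_apply]
  have htj : t j = 1 := Fin.eq_one_of_ne_zero (t j) hj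
  rw [chr, hdot, htj, ZMod.val_one, pow_one]

lemma sum_chr_eq_ite (t : Fin n → ZMod 2) :
    ∑ u, chr u t = if t = 0 then (2 : ℂ) ^ n else 0 := by
  split_ifs with ht
  · simp [ht]
  obtain ⟨e, he⟩ := exists_chr_eq_neg_one ht
  refine eq_zero_of_mul_eq_self_left (he ▸ by norm_num : chr e t ≠ 1) ?_
  rw [mul_sum]
  exact Fintype.sum_equiv (Equiv.addLeft e) _ _ fun u ↦ (chr_add_left e u t).symm

noncomputable def walsh (g : (Fin n → ZMod 2) → ℂ) (u : Fin n → ZMod 2) : ℂ :=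
  ∑ x, g x * chr u x

noncomputable def autocorr (g : (Fin n → ZMod 2) → ℂ) (s : Fin n → ZMod 2) : ℂ :=
  ∑ y, g (y + s) * starRingEnd ℂ (g y)

lemma walsh_mul_conj (g : (Fin n → ZMod 2) → ℂ) (u : Fin n → ZMod 2) :
    walsh g u * starRingEnd ℂ (walsh g u) = walsh (autocorr g) u := by
  calc walsh g u * starRingEnd ℂ (walsh g u)
      = ∑ y, ∑ x, g x * starRingEnd ℂ (g y) * chr u (y + x) := by
        simp only [walsh, map_sum, map_mul, conj_chr, sum_mul_sum, chr_add_right]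
        rw [sum_comm]
        refine sum_congr rfl fun _ _ => sum_congr rfl fun _ _ => by ring
    _ = ∑ y, ∑ t, g (y + t) * starRingEnd ℂ (g y) * chr u t := by
        refine sum_congr rfl fun y _ => ?_
        refine Fintype.sum_equiv (Equiv.addLeft y) _ _ fun x => ?_
        rw [Equiv.coe_addLeft, ← add_assoc, ZModModule.add_self, zero_add]
    _ = walsh (autocorr g) u := by
        simp only [walsh, autocorr, sum_mul]
        rw [sum_comm]

lemma walsh_walsh (h : (Fin n → ZMod 2) → ℂ) (s : Fin n → ZMod 2) :
    walsh (walsh h) s = 2 ^ n * h s := by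
  calc walsh (walsh h) s = ∑ y, h y * ∑ x, chr x (y + s) := by
        simp only [walsh, sum_mul, mul_sum, chr_add_right]
        rw [sum_comm]
        refine sum_congr rfl fun _ _ => sum_congr rfl fun _ _ => by rw [chr_comm s]; ring
    _ = 2 ^ n * h s := by
        simp only [sum_chr_eq_ite, add_eq_zero_iff_eq_neg, ZModModule.neg_eq_self, mul_ite,
          mul_zero, sum_ite_eq', mem_univ, if_true, mul_comm]

lemma walsh_eq_const_iff_eq_single (h : (Fin n → ZMod 2) → ℂ) (c : ℂ) :
    walsh h = (fun _ => c) ↔ h = Pi.single 0 c := by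
  constructor
  · intro hc
    funext s
    refine mul_left_cancel₀ (pow_ne_zero n two_ne_zero : (2 : ℂ) ^ n ≠ 0) ?_
    rw [← walsh_walsh, hc, walsh]
    simp only [chr_comm s, ← mul_sum, sum_chr_eq_ite, Pi.single_apply]
    split_ifs <;> ring
  · rintro rfl
    funext u
    simp [walsh, Pi.single_apply]

lemma mul_conjTranspose_of_add (g : (Fin n → ZMod 2) → ℂ) :
    (of fun u v => g (u + v)) * (of fun u v => g (u + v))ᴴ = of fun u w => autocorr g (u + w) := by
  ext u w
  simp only [mul_apply, conjTranspose_apply, of_apply, autocorr, Complex.star_def]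
  refine Fintype.sum_equiv (Equiv.addLeft w) _ _ fun v => ?_
  have hvw : w + v + (u + w) = u + v := by
    rw [add_comm w v, add_comm u w, ZModModule.add_add_add_cancel, add_comm]
  rw [Equiv.coe_addLeft, hvw]

lemma of_add_eq_smul_one_iff (h : (Fin n → ZMod 2) → ℂ) (c : ℂ) :
    (of fun u w => h (u + w)) = c • (1 : Matrix (Fin n → ZMod 2) (Fin n → ZMod 2) ℂ) ↔
      h = Pi.single 0 c := by
  constructor
  · intro hc
    funext s
    simpa [Pi.single_apply, one_apply] using congr_fun₂ hc s 0
  · rintro rfl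
    ext u w
    simp [Pi.single_apply, one_apply, add_eq_zero_iff_eq_neg, ZModModule.neg_eq_self]

end Walsh

lemma norm_eq_sqrt_iff_mul_conj (z : ℂ) {a : ℝ} (ha : 0 ≤ a) :
    ‖z‖ = √a ↔ z * starRingEnd ℂ z = a := by
  rw [Complex.mul_conj', eq_comm, Real.sqrt_eq_iff_eq_sq ha (norm_nonneg z), eq_comm]
  exact_mod_cast Iff.rfl

theorem gbent_iff_butson_general (n q : ℕ) (f : (Fin n → ZMod 2) → ZMod q) :
    (∀ u : Fin n → ZMod 2, ‖WHT f u‖ = Real.sqrt (2 ^ n)) ↔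
      Amat f * (Amat f)ᴴ = ((2 : ℂ) ^ n) • (1 : Matrix (Fin n → ZMod 2) (Fin n → ZMod 2) ℂ) := by
  set g : (Fin n → ZMod 2) → ℂ := fun x => zeta q ^ (f x).val
  have hW : ∀ u, WHT f u = walsh g u := fun _ => rfl
  have hA : Amat f = of fun u v => g (u + v) := rfl
  calc (∀ u, ‖WHT f u‖ = √(2 ^ n)) ↔ ∀ u, walsh (autocorr g) u = 2 ^ n := by
        simp only [hW, norm_eq_sqrt_iff_mul_conj _ (by positivity : (0 : ℝ) ≤ 2 ^ n),
          walsh_mul_conj, Complex.ofReal_pow, Complex.ofReal_ofNat]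
    _ ↔ autocorr g = Pi.single 0 (2 ^ n) := by rw [← walsh_eq_const_iff_eq_single, funext_iff]
    _ ↔ _ := by rw [hA, mul_conjTranspose_of_add, of_add_eq_smul_one_iff]

/-- `f` is gbent iff its weighted adjacency matrix is a `q`-Butson Hadamard matrix of
dimension `2^n`, i.e. `A_f A_f* = 2^n I`. -/
theorem gbent_iff_butson (n q : ℕ) (hq : 0 < q) (f : (Fin n → ZMod 2) → ZMod q) :
    (∀ u : Fin n → ZMod 2, ‖WHT f u‖ = Real.sqrt (2 ^ n)) ↔
      Amat f * (Amat f)ᴴ = ((2 : ℂ) ^ n) • (1 : Matrix (Fin n → ZMod 2) (Fin n → ZMod 2) ℂ) :=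
  gbent_iff_butson_general n q f
end

section
/- Let f = a_0 + 2a_1 : V_n → Z_4 with a_0, a_1 Boolean functions and n even. If f is gbent, then for any two pairs of vertices {a,b} and {c,d}, |N_{{1,2}}(a,b)| = |N_{{1,2}}(c,d)|, where N_{{1,2}}(a,b) = {w : f(w⊕a) ∈ {1,2}, f(w⊕b) ∈ {1,2}}. -/
open Finset BigOperators

/-! Since `i^(b₀ + 2b₁) = ((1 + i)(-1)^b₁ + (1 - i)(-1)^(b₀ + b₁)) / 2`, the generalized Walsh
transform of `f` is `((1 + i) W_{a₁}(u) + (1 - i) W_g(u)) / 2` with `g = a₀ + a₁`, so gbentness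
says `W_{a₁}(u)² + W_g(u)² = 2^(n+1)`. For even `n` a sum of two integer squares equal to `2 · 4^m`
has both squares equal to `4^m`, so `g` is bent. Now `f(x) ∈ {1, 2}` exactly when `g(x) = 1`, and
`4 |N_{{1,2}}(a,b)| = 2^n - 2 Σ_x (-1)^g(x) + Σ_x (-1)^(g(x) + g(x + a + b))`, where the last sum is
an autocorrelation of the bent function `g` at `a + b ≠ 0`, hence zero. -/

theorem Int.sq_emod_four (a : ℤ) : a ^ 2 % 4 = 0 ∨ a ^ 2 % 4 = 1 := by
  rcases Int.even_or_odd a with ⟨k, rfl⟩ | ha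
  · left; ring_nf; omega
  · exact Or.inr (Int.sq_mod_four_eq_one_of_odd ha)

theorem sq_eq_four_pow_of_sq_add_sq_eq {m : ℕ} {a b : ℤ} (h : a ^ 2 + b ^ 2 = 2 * 4 ^ m) :
    b ^ 2 = 4 ^ m := by
  induction m generalizing a b with
  | zero =>
    rw [pow_zero] at h ⊢
    have := a.sq_emod_four; have := b.sq_emod_four; have := sq_nonneg a; have := sq_nonneg b
    omega
  | succ m ih =>
    rw [pow_succ (4 : ℤ) m] at h ⊢
    have := a.sq_emod_four; have := b.sq_emod_four
    rcases Int.even_or_odd a with ⟨k, rfl⟩ | ha <;> rcases Int.even_or_odd b with ⟨l, rfl⟩ | hb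
    · have : k ^ 2 + l ^ 2 = 2 * 4 ^ m := by linarith
      rw [← ih this]; ring
    all_goals
      have := Int.sq_mod_four_eq_one_of_odd ‹_›
      omega

namespace BooleanFunction

def sgn (b : ZMod 2) : ℤ := (-1) ^ b.val

theorem sgn_add : ∀ a b : ZMod 2, sgn (a + b) = sgn a * sgn b := by decide

theorem sgn_sum {ι : Type*} (s : Finset ι) (g : ι → ZMod 2) :
    sgn (∑ i ∈ s, g i) = ∏ i ∈ s, sgn (g i) := by
  induction s using Finset.cons_induction with
  | empty => rfl
  | cons i s hi ih => rw [sum_cons, prod_cons, sgn_add, ih]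

theorem intCast_sgn_dotp {n : ℕ} (u x : Fin n → ZMod 2) :
    ((sgn (dotp u x) : ℤ) : ℂ) = chr u x := by
  simp [sgn, chr]

variable {n : ℕ}

theorem dotp_add_right (u x y : Fin n → ZMod 2) : dotp u (x + y) = dotp u x + dotp u y := by
  simp only [dotp, Pi.add_apply, mul_add, sum_add_distrib]

theorem add_self_eq_zero (v : Fin n → ZMod 2) : v + v = 0 :=
  funext fun i => CharTwo.add_self_eq_zero (v i)

theorem neg_eq_self (v : Fin n → ZMod 2) : -v = v :=
  neg_eq_of_add_eq_zero_right (add_self_eq_zero v)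

theorem add_add_eq_zero_iff (x y e : Fin n → ZMod 2) : x + y + e = 0 ↔ y = x + e := by
  rw [add_assoc, add_eq_zero_iff_neg_eq, neg_eq_self, eq_comm, ← eq_sub_iff_add_eq, sub_eq_add_neg,
    neg_eq_self]

theorem sum_sgn_dotp (v : Fin n → ZMod 2) :
    ∑ u : Fin n → ZMod 2, sgn (dotp u v) = if v = 0 then 2 ^ n else 0 := by
  have hcoord : ∀ c : ZMod 2, ∑ b : ZMod 2, sgn (b * c) = if c = 0 then 2 else 0 := by decide
  simp_rw [dotp, sgn_sum]
  rw [← Fintype.prod_sum (fun i b => sgn (b * v i))]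
  simp_rw [hcoord]
  split_ifs with hv
  · simp [hv]
  · obtain ⟨i, hi⟩ := Function.ne_iff.mp hv
    exact prod_eq_zero (mem_univ i) (if_neg hi)

def walsh (g : (Fin n → ZMod 2) → ZMod 2) (u : Fin n → ZMod 2) : ℤ :=
  ∑ x, sgn (g x) * sgn (dotp u x)

def autocorrelation (g : (Fin n → ZMod 2) → ZMod 2) (e : Fin n → ZMod 2) : ℤ :=
  ∑ x, sgn (g x) * sgn (g (x + e))

def IsBent (g : (Fin n → ZMod 2) → ZMod 2) : Prop :=
  ∀ u, walsh g u ^ 2 = 2 ^ n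

-- The Wiener–Khintchine formula.
theorem sum_walsh_sq_mul_sgn_dotp (g : (Fin n → ZMod 2) → ZMod 2) (e : Fin n → ZMod 2) :
    ∑ u, walsh g u ^ 2 * sgn (dotp u e) = 2 ^ n * autocorrelation g e := by
  have hexpand : ∀ u, walsh g u ^ 2 * sgn (dotp u e) =
      ∑ x, ∑ y, sgn (g x) * sgn (g y) * sgn (dotp u (x + y + e)) := by
    intro u
    simp_rw [walsh, sq, sum_mul_sum, sum_mul, dotp_add_right, sgn_add]
    exact sum_congr rfl fun x _ => sum_congr rfl fun y _ => by ring
  have hinner : ∀ x y : Fin n → ZMod 2,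
      ∑ u, sgn (g x) * sgn (g y) * sgn (dotp u (x + y + e)) =
        if y = x + e then 2 ^ n * (sgn (g x) * sgn (g y)) else 0 := by
    intro x y
    rw [← mul_sum, sum_sgn_dotp]
    simp only [add_add_eq_zero_iff]
    split_ifs <;> ring
  rw [sum_congr rfl fun u _ => hexpand u, sum_comm, autocorrelation, mul_sum]
  refine sum_congr rfl fun x _ => ?_
  rw [sum_comm, sum_congr rfl fun y _ => hinner x y, sum_ite_eq' univ, if_pos (mem_univ _)]

theorem IsBent.autocorrelation_eq_zero {g : (Fin n → ZMod 2) → ZMod 2} (hg : IsBent g)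
    {e : Fin n → ZMod 2} (he : e ≠ 0) : autocorrelation g e = 0 := by
  have h := sum_walsh_sq_mul_sgn_dotp g e
  simp_rw [hg _, ← mul_sum, sum_sgn_dotp, if_neg he, mul_zero] at h
  exact (mul_eq_zero.mp h.symm).resolve_left (by positivity)

theorem sum_sgn_add_mul_sgn_add (g : (Fin n → ZMod 2) → ZMod 2) (p q : Fin n → ZMod 2) :
    ∑ w, sgn (g (w + p)) * sgn (g (w + q)) = autocorrelation g (p + q) := by
  refine Fintype.sum_equiv (Equiv.addRight p) _ _ fun w => ?_
  rw [Equiv.coe_addRight, add_assoc w p, ← add_assoc p, add_self_eq_zero, zero_add]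

theorem four_mul_card_filter_add_eq_one (g : (Fin n → ZMod 2) → ZMod 2) (p q : Fin n → ZMod 2) :
    4 * (#{w | g (w + p) = 1 ∧ g (w + q) = 1} : ℤ) =
      2 ^ n - 2 * ∑ x, sgn (g x) + autocorrelation g (p + q) := by
  have hindicator : ∀ α β : ZMod 2,
      (1 - sgn α) * (1 - sgn β) = if α = 1 ∧ β = 1 then 4 else 0 := by decide
  have hshift : ∀ p : Fin n → ZMod 2, ∑ w, sgn (g (w + p)) = ∑ x, sgn (g x) := fun p =>
    Equiv.sum_comp (Equiv.addRight p) (fun x => sgn (g x))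
  calc 4 * (#{w | g (w + p) = 1 ∧ g (w + q) = 1} : ℤ)
      = ∑ w, (1 - sgn (g (w + p))) * (1 - sgn (g (w + q))) := by
        simp_rw [hindicator, card_filter, Nat.cast_sum, mul_sum]
        simp
    _ = 2 ^ n - 2 * ∑ x, sgn (g x) + autocorrelation g (p + q) := by
        simp only [sub_mul, one_mul, mul_sub, mul_one, sum_sub_distrib,
          hshift, sum_sgn_add_mul_sgn_add]
        simp only [sum_const, card_univ, Fintype.card_pi, ZMod.card, prod_const,
          Fintype.card_fin, Int.nsmul_eq_mul, Nat.cast_pow, Nat.cast_ofNat, mul_one]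
        ring

theorem IsBent.card_filter_add_eq_one_eq {g : (Fin n → ZMod 2) → ZMod 2} (hg : IsBent g)
    {a b c d : Fin n → ZMod 2} (hab : a ≠ b) (hcd : c ≠ d) :
    #{w | g (w + a) = 1 ∧ g (w + b) = 1} = #{w | g (w + c) = 1 ∧ g (w + d) = 1} := by
  have hne : ∀ {p q : Fin n → ZMod 2}, p ≠ q → p + q ≠ 0 := fun hpq h =>
    hpq (by rwa [add_eq_zero_iff_eq_neg, neg_eq_self] at h)
  have hab' := four_mul_card_filter_add_eq_one g a b
  have hcd' := four_mul_card_filter_add_eq_one g c d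
  rw [hg.autocorrelation_eq_zero (hne hab)] at hab'
  rw [hg.autocorrelation_eq_zero (hne hcd)] at hcd'
  omega

theorem I_pow_val (b : ZMod 2) :
    Complex.I ^ b.val = (1 + Complex.I + (1 - Complex.I) * sgn b) / 2 := by
  obtain rfl | rfl : b = 0 ∨ b = 1 := by revert b; decide
  · simp [sgn]
  · simp only [sgn, ZMod.val_one, pow_one, Int.cast_neg, Int.cast_one]
    ring

theorem val_natCast_val_add_two_mul_val (b₀ b₁ : ZMod 2) :
    ((b₀.val + 2 * b₁.val : ℕ) : ZMod 4).val = b₀.val + 2 * b₁.val := by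
  have := b₀.val_lt; have := b₁.val_lt
  exact ZMod.val_natCast_of_lt (by omega)

theorem I_pow_val_natCast_val_add_two_mul_val (b₀ b₁ : ZMod 2) :
    Complex.I ^ ((b₀.val + 2 * b₁.val : ℕ) : ZMod 4).val =
      ((1 + Complex.I) * sgn b₁ + (1 - Complex.I) * sgn (b₀ + b₁)) / 2 := by
  rw [val_natCast_val_add_two_mul_val, pow_add, pow_mul, Complex.I_sq, I_pow_val, sgn_add]
  simp only [sgn, Int.cast_mul, Int.cast_pow, Int.cast_neg, Int.cast_one]
  ring

theorem natCast_val_add_two_mul_val_mem_iff :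
    ∀ b₀ b₁ : ZMod 2, ((b₀.val + 2 * b₁.val : ℕ) : ZMod 4) ∈ ({1, 2} : Finset (ZMod 4)) ↔
      b₀ + b₁ = 1 := by
  decide

theorem norm_sq_one_add_I_mul_add_one_sub_I_mul (A B : ℝ) :
    ‖((1 + Complex.I) * A + (1 - Complex.I) * B) / 2‖ ^ 2 = (A ^ 2 + B ^ 2) / 2 := by
  have h : ((1 + Complex.I) * A + (1 - Complex.I) * B) / 2 =
      ((A + B) / 2 : ℝ) + ((A - B) / 2 : ℝ) * Complex.I := by
    push_cast; ring
  rw [h, ← Complex.normSq_eq_norm_sq, Complex.normSq_add_mul_I]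
  ring

theorem sum_I_pow_mul_chr_eq {f : (Fin n → ZMod 2) → ZMod 4} {a₀ a₁ : (Fin n → ZMod 2) → ZMod 2}
    (hf : ∀ x, f x = (((a₀ x).val + 2 * (a₁ x).val : ℕ) : ZMod 4)) (u : Fin n → ZMod 2) :
    ∑ x, Complex.I ^ (f x).val * chr u x =
      ((1 + Complex.I) * (walsh a₁ u : ℝ) + (1 - Complex.I) * (walsh (a₀ + a₁) u : ℝ)) / 2 := by
  simp_rw [hf, I_pow_val_natCast_val_add_two_mul_val, walsh, ← intCast_sgn_dotp]
  push_cast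
  rw [mul_sum, mul_sum, ← sum_add_distrib, sum_div]
  refine sum_congr rfl fun x _ => ?_
  simp only [Pi.add_apply]
  ring

theorem isBent_add_of_norm_sum_I_pow_mul_chr (hn : Even n) {f : (Fin n → ZMod 2) → ZMod 4}
    {a₀ a₁ : (Fin n → ZMod 2) → ZMod 2}
    (hf : ∀ x, f x = (((a₀ x).val + 2 * (a₁ x).val : ℕ) : ZMod 4))
    (hgbent : ∀ u, ‖∑ x, Complex.I ^ (f x).val * chr u x‖ = Real.sqrt (2 ^ n)) :
    IsBent (a₀ + a₁) := by
  intro u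
  obtain ⟨m, rfl⟩ := hn
  have hreal : ((walsh a₁ u : ℝ) ^ 2 + (walsh (a₀ + a₁) u : ℝ) ^ 2) / 2 = 2 ^ (m + m) := by
    rw [← norm_sq_one_add_I_mul_add_one_sub_I_mul, ← sum_I_pow_mul_chr_eq hf, hgbent,
      Real.sq_sqrt (by positivity)]
  have hint : walsh a₁ u ^ 2 + walsh (a₀ + a₁) u ^ 2 = 2 * 2 ^ (m + m) := by
    have : ((walsh a₁ u ^ 2 + walsh (a₀ + a₁) u ^ 2 : ℤ) : ℝ) = ((2 * 2 ^ (m + m) : ℤ) : ℝ) := by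
      push_cast; linarith
    exact_mod_cast this
  have hfour : (2 : ℤ) ^ (m + m) = 4 ^ m := by rw [← two_mul, pow_mul]; norm_num
  rw [hfour] at hint ⊢
  exact sq_eq_four_pow_of_sq_add_sq_eq hint

end BooleanFunction

open BooleanFunction

/-- If `f = a₀ + 2a₁ : V_n → Z₄` (`n` even) is gbent, then `|N_{{1,2}}(a,b)|` is the same for
all pairs of distinct vertices. -/
theorem gbent_N12_constant (n : ℕ) (hn : Even n)
    (f : (Fin n → ZMod 2) → ZMod 4) (a0 a1 : (Fin n → ZMod 2) → ZMod 2)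
    (hf : ∀ x, f x = (((a0 x).val + 2 * (a1 x).val : ℕ) : ZMod 4))
    (hgbent : ∀ u : Fin n → ZMod 2,
      ‖∑ x, Complex.I ^ (f x).val * chr u x‖ = Real.sqrt (2 ^ n)) :
    ∀ a b c d : Fin n → ZMod 2, a ≠ b → c ≠ d →
      (univ.filter (fun w : Fin n → ZMod 2 =>
        f (w + a) ∈ ({1, 2} : Finset (ZMod 4)) ∧ f (w + b) ∈ ({1, 2} : Finset (ZMod 4)))).card =
      (univ.filter (fun w : Fin n → ZMod 2 =>
        f (w + c) ∈ ({1, 2} : Finset (ZMod 4)) ∧ f (w + d) ∈ ({1, 2} : Finset (ZMod 4)))).card := by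
  intro a b c d hab hcd
  have hmem : ∀ x, f x ∈ ({1, 2} : Finset (ZMod 4)) ↔ (a0 + a1) x = 1 := fun x => by
    rw [hf, natCast_val_add_two_mul_val_mem_iff, Pi.add_apply]
  simp_rw [hmem]
  exact (isBent_add_of_norm_sum_I_pow_mul_chr hn hf hgbent).card_filter_add_eq_one_eq hab hcd
end

section
/- Let f ∈ GB_n^{2^k} with binary decomposition f = a_0 + 2a_1 + ... + 2^{k−1}a_{k−1}, a_i : V_n → F_2. Fix c = (c_0,...,c_{k−2}) ∈ F_2^{k−1} and set f_c = c_0 a_0 ⊕ ... ⊕ c_{k−2} a_{k−2} ⊕ a_{k−1}. Then for every u ∈ V_n: f_c(u) = 1 if and only if f(u) ∈ X_c^1, where X_c^1 = { ι(c̃) + ι(d) : c̃ ⪯ (c,1), wt(c̃) odd, d ⪯ c̄ }, with ι the canonical binary-to-integer map on appropriate coordinates, c̄ the complement of c (extended by 0 in the last coordinate), and ⪯ coordinatewise order. -/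
/-!
Write `b i = a i u` for the binary digits of `f u`. Splitting every digit as
`b = c * b + (1 - c) * b` writes `f u = ι(c̃) + ι(d)` with `c̃ = c * b ⪯ c` and `d = (1 - c) * b ⪯ c̄`
(`d` vanishes in the last coordinate because `c` is `1` there), and `f_c(u) ≡ wt(c̃) mod 2`.
Conversely `c̃` and `d` have disjoint supports, so `ι(c̃) + ι(d)` is the binary expansion of an
integer below `2^k`; by uniqueness of binary expansions the digits of `f u` are `c̃ + d`, whence
`c * b = c̃`.
-/

open Finset BigOperators

/-- The set `X_c^1 = { ι(c̃) + ι(d) : c̃ ⪯ (c,1), wt(c̃) odd, d ⪯ c̄ } ⊆ Z_{2^k}`, where `c` is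
identified with the function on `Fin k` whose last value is `1` (i.e. `(c,1)`), and `c̄` is the
bitwise complement of `c` on the first `k-1` coordinates (with last coordinate `0`). -/
def Xc1 (k : ℕ) (c : Fin k → ZMod 2) : Set (ZMod (2 ^ k)) :=
  { t | ∃ ct dd : Fin k → ZMod 2,
      (∀ i, (ct i).val ≤ (c i).val) ∧
      (∀ i : Fin k, ((i : ℕ) < k - 1 → (dd i).val ≤ 1 - (c i).val) ∧
                    ((i : ℕ) = k - 1 → (dd i).val = 0)) ∧
      Odd (∑ i, (ct i).val) ∧
      t = (((∑ i, (ct i).val * 2 ^ (i : ℕ)) + ∑ i, (dd i).val * 2 ^ (i : ℕ) : ℕ) :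
            ZMod (2 ^ k)) }

section BinaryExpansion

theorem Fin.sum_univ_succ_mul_two_pow {k : ℕ} (d : Fin (k + 1) → ℕ) :
    ∑ i, d i * 2 ^ (i : ℕ) = d 0 + 2 * ∑ i : Fin k, d i.succ * 2 ^ (i : ℕ) := by
  rw [Fin.sum_univ_succ, mul_sum]
  simp only [Fin.val_zero, pow_zero, mul_one, Fin.val_succ, pow_succ]
  congr 1
  exact sum_congr rfl fun _ _ => by ring

theorem sum_mul_two_pow_lt {k : ℕ} (d : Fin k → ℕ) (hd : ∀ i, d i ≤ 1) :
    ∑ i, d i * 2 ^ (i : ℕ) < 2 ^ k := by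
  induction k with
  | zero => simp
  | succ k ih =>
    have htail := ih (fun i => d i.succ) (fun i => hd i.succ)
    have h0 := hd 0
    rw [Fin.sum_univ_succ_mul_two_pow, pow_succ]
    omega

theorem sum_mul_two_pow_injective {k : ℕ} {d e : Fin k → ℕ} (hd : ∀ i, d i ≤ 1)
    (he : ∀ i, e i ≤ 1) (h : ∑ i, d i * 2 ^ (i : ℕ) = ∑ i, e i * 2 ^ (i : ℕ)) : d = e := by
  induction k with
  | zero => exact funext fun i => i.elim0
  | succ k ih =>
    rw [Fin.sum_univ_succ_mul_two_pow, Fin.sum_univ_succ_mul_two_pow] at h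
    have hd0 := hd 0
    have he0 := he 0
    have h0 : d 0 = e 0 := by omega
    have htail : (fun i : Fin k => d i.succ) = fun i => e i.succ :=
      ih (fun i => hd i.succ) (fun i => he i.succ) (by omega)
    funext i
    exact Fin.cases h0 (congrFun htail) i

end BinaryExpansion

section ZModTwo

theorem ZMod.sum_eq_one_iff_odd_sum_val {ι : Type*} (s : Finset ι) (g : ι → ZMod 2) :
    ∑ i ∈ s, g i = 1 ↔ Odd (∑ i ∈ s, (g i).val) := by
  rw [← ZMod.natCast_eq_one_iff_odd, Nat.cast_sum]
  simp only [ZMod.natCast_val, ZMod.cast_id', id]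

theorem ZMod.val_mul_le_val_left_two (x y : ZMod 2) : (x * y).val ≤ x.val := by
  revert x y; decide

theorem ZMod.val_mul_add_val_one_sub_mul_two (c b : ZMod 2) :
    (c * b).val + ((1 - c) * b).val = b.val := by
  revert c b; decide

theorem ZMod.val_one_sub_mul_le_two (c b : ZMod 2) : ((1 - c) * b).val ≤ 1 - c.val := by
  revert c b; decide

theorem ZMod.val_add_val_le_one_two {c x y : ZMod 2} (hx : x.val ≤ c.val)
    (hy : y.val ≤ 1 - c.val) : x.val + y.val ≤ 1 := by
  revert c x y; decide

theorem ZMod.val_mul_eq_of_val_eq_add_two {c x y b : ZMod 2} (hx : x.val ≤ c.val)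
    (hy : y.val ≤ 1 - c.val) (hb : b.val = x.val + y.val) : (c * b).val = x.val := by
  revert c x y b; decide

end ZModTwo

section Xc1

variable {k : ℕ} {c : Fin k → ZMod 2}

theorem mem_Xc1_of_odd (hc : ∀ i : Fin k, (i : ℕ) = k - 1 → c i = 1) (b : Fin k → ZMod 2)
    (hodd : Odd (∑ i, (c i * b i).val)) :
    ((∑ i, (b i).val * 2 ^ (i : ℕ) : ℕ) : ZMod (2 ^ k)) ∈ Xc1 k c := by
  refine ⟨fun i => c i * b i, fun i => (1 - c i) * b i,
    fun i => ZMod.val_mul_le_val_left_two _ _,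
    fun i => ⟨fun _ => ZMod.val_one_sub_mul_le_two _ _, fun hi => ?_⟩, hodd, ?_⟩
  · simp [hc i hi]
  · rw [← sum_add_distrib]
    simp only [← add_mul, ZMod.val_mul_add_val_one_sub_mul_two]

theorem odd_of_mem_Xc1 (b : Fin k → ZMod 2)
    (hmem : ((∑ i, (b i).val * 2 ^ (i : ℕ) : ℕ) : ZMod (2 ^ k)) ∈ Xc1 k c) :
    Odd (∑ i, (c i * b i).val) := by
  obtain ⟨ct, dd, hct, hdd, hodd, heq⟩ := hmem
  have hdd' : ∀ i, (dd i).val ≤ 1 - (c i).val := fun i => by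
    rcases lt_or_eq_of_le (Nat.le_sub_one_of_lt i.isLt) with hi | hi
    · exact (hdd i).1 hi
    · simp [(hdd i).2 hi]
  have hdigit : ∀ i, (ct i).val + (dd i).val ≤ 1 := fun i =>
    ZMod.val_add_val_le_one_two (hct i) (hdd' i)
  rw [← sum_add_distrib] at heq
  simp only [← add_mul] at heq
  have hb : (fun i => (b i).val) = fun i => (ct i).val + (dd i).val := by
    refine sum_mul_two_pow_injective (fun i => Nat.le_of_lt_succ (ZMod.val_lt (b i))) hdigit ?_
    have hval := congrArg ZMod.val heq
    rwa [ZMod.val_natCast_of_lt (sum_mul_two_pow_lt _ fun i => Nat.le_of_lt_succ (ZMod.val_lt _)),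
      ZMod.val_natCast_of_lt (sum_mul_two_pow_lt _ hdigit)] at hval
  convert hodd using 2 with i
  exact ZMod.val_mul_eq_of_val_eq_add_two (hct i) (hdd' i) (congrFun hb i)

end Xc1

/-- For `f = Σ 2^i a_i : V_n → Z_{2^k}` and `c` with last coordinate `1` (representing `(c,1)`
for `c ∈ F_2^{k-1}`), the component function `f_c = Σ c_i a_i` satisfies
`f_c(u) = 1 ↔ f(u) ∈ X_c^1`. -/
theorem component_eq_one_iff_mem_Xc1 (n k : ℕ) (hk : 0 < k)
    (f : (Fin n → ZMod 2) → ZMod (2 ^ k))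
    (a : Fin k → (Fin n → ZMod 2) → ZMod 2)
    (hf : ∀ x, (f x).val = ∑ i : Fin k, (a i x).val * 2 ^ (i : ℕ))
    (c : Fin k → ZMod 2) (hc : c ⟨k - 1, by omega⟩ = 1) :
    ∀ u : Fin n → ZMod 2, (∑ i, c i * a i u) = 1 ↔ f u ∈ Xc1 k c := by
  intro u
  rw [ZMod.sum_eq_one_iff_odd_sum_val, ← ZMod.natCast_zmod_val (f u), hf u]
  have hc_last : ∀ i : Fin k, (i : ℕ) = k - 1 → c i = 1 := fun i hi =>
    (congrArg c (Fin.ext hi)).trans hc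
  exact ⟨mem_Xc1_of_odd hc_last _, odd_of_mem_Xc1 _⟩
end
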